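/- Let B be a real m×n matrix with QR-factorization B = QR, where Q is an m×n matrix with orthonormal columns (QᵀQ = I_n) and R is an upper triangular n×n matrix. Let c ∈ ℝ^m and γ > 0. Then σ_min([B, cγ]) ≥ min{σ_min(B), γ} · σ_min([Q, c]). -/
import Mathlib


/-- Euclidean norm of a vector in `ℝ^m`. -/
noncomputable def euclNorm {m : ℕ} (v : Fin m → ℝ) : ℝ :=
  Real.sqrt (∑ i, v i ^ 2)

/-- `σ_max(A) = sup {‖Ax‖₂ : ‖x‖₂ = 1}`. -/
noncomputable def sigmaMax {m n : ℕ} (A : Matrix (Fin m) (Fin n) ℝ) : ℝ :=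
  sSup {r : ℝ | ∃ x : Fin n → ℝ, euclNorm x = 1 ∧ r = euclNorm (A.mulVec x)}

/-- `σ_min(A) = inf {‖Ax‖₂ : ‖x‖₂ = 1}`. -/
noncomputable def sigmaMin {m n : ℕ} (A : Matrix (Fin m) (Fin n) ℝ) : ℝ :=
  sInf {r : ℝ | ∃ x : Fin n → ℝ, euclNorm x = 1 ∧ r = euclNorm (A.mulVec x)}

/-- Condition number `κ(A) = σ_max(A) / σ_min(A)`. -/
noncomputable def condNum {m n : ℕ} (A : Matrix (Fin m) (Fin n) ℝ) : ℝ :=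
  sigmaMax A / sigmaMin A

/-- `[B, b]`: the matrix `B` augmented with `b` as an additional last column. -/
def augment {m n : ℕ} (B : Matrix (Fin m) (Fin n) ℝ) (b : Fin m → ℝ) :
    Matrix (Fin m) (Fin (n + 1)) ℝ :=
  Matrix.of fun i => Fin.snoc (B i) (b i)

lemma euclNorm_nonneg {m : ℕ} (v : Fin m → ℝ) : 0 ≤ euclNorm v :=
  Real.sqrt_nonneg _

lemma euclNorm_sq {m : ℕ} (v : Fin m → ℝ) : euclNorm v ^ 2 = ∑ i, v i ^ 2 := by
  rw [euclNorm, Real.sq_sqrt]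
  positivity

lemma euclNorm_smul {m : ℕ} (a : ℝ) (v : Fin m → ℝ) :
    euclNorm (a • v) = |a| * euclNorm v := by
  unfold euclNorm
  rw [← Real.sqrt_sq_eq_abs, ← Real.sqrt_mul (sq_nonneg a), Finset.mul_sum]
  congr 1
  apply Finset.sum_congr rfl
  intro i _
  simp [mul_pow]

lemma sigmaMin_nonneg {m n : ℕ} (A : Matrix (Fin m) (Fin n) ℝ) : 0 ≤ sigmaMin A := by
  apply Real.sInf_nonneg
  rintro r ⟨x, hx, rfl⟩
  exact euclNorm_nonneg _

lemma sigmaMin_bddBelow {m n : ℕ} (A : Matrix (Fin m) (Fin n) ℝ) :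
    BddBelow {r : ℝ | ∃ x : Fin n → ℝ, euclNorm x = 1 ∧ r = euclNorm (A.mulVec x)} := by
  refine ⟨0, ?_⟩
  rintro r ⟨x, hx, rfl⟩
  exact euclNorm_nonneg _

lemma sigmaMin_mul_le {m n : ℕ} (A : Matrix (Fin m) (Fin n) ℝ) (z : Fin n → ℝ) :
    sigmaMin A * euclNorm z ≤ euclNorm (A.mulVec z) := by
  rcases eq_or_lt_of_le (euclNorm_nonneg z) with h | h
  · rw [← h, mul_zero]; exact euclNorm_nonneg _
  · have hmem : euclNorm (A.mulVec ((euclNorm z)⁻¹ • z)) ∈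
        {r : ℝ | ∃ x : Fin n → ℝ, euclNorm x = 1 ∧ r = euclNorm (A.mulVec x)} := by
      refine ⟨(euclNorm z)⁻¹ • z, ?_, rfl⟩
      rw [euclNorm_smul, abs_of_pos (inv_pos.mpr h), inv_mul_cancel₀ h.ne']
    have hle := csInf_le (sigmaMin_bddBelow A) hmem
    rw [Matrix.mulVec_smul, euclNorm_smul, abs_of_pos (inv_pos.mpr h)] at hle
    have := mul_le_mul_of_nonneg_right hle h.le
    rwa [inv_mul_eq_div, div_mul_cancel₀ _ h.ne'] at this

lemma sum_sq_eq_dot {k : ℕ} (v : Fin k → ℝ) : ∑ i, v i ^ 2 = dotProduct v v := by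
  simp [dotProduct, sq]

lemma euclNorm_mulVec_of_orthonormal {m n : ℕ} {Q : Matrix (Fin m) (Fin n) ℝ}
    (hQ : Q.transpose * Q = 1) (w : Fin n → ℝ) :
    euclNorm (Q.mulVec w) = euclNorm w := by
  unfold euclNorm
  congr 1
  rw [sum_sq_eq_dot (Q.mulVec w), sum_sq_eq_dot w, Matrix.dotProduct_mulVec,
    ← Matrix.mulVec_transpose, Matrix.mulVec_mulVec, hQ, Matrix.one_mulVec]

lemma augment_mulVec {m n : ℕ} (B : Matrix (Fin m) (Fin n) ℝ) (b : Fin m → ℝ)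
    (x : Fin (n + 1) → ℝ) :
    (augment B b).mulVec x = B.mulVec (fun j => x j.castSucc) + (x (Fin.last n)) • b := by
  funext i
  simp only [Matrix.mulVec, dotProduct, augment, Matrix.of_apply, Pi.add_apply,
    Pi.smul_apply, smul_eq_mul]
  rw [Fin.sum_univ_castSucc]
  simp [mul_comm]

lemma euclNorm_single {k : ℕ} : euclNorm (Pi.single (0 : Fin (k + 1)) (1 : ℝ)) = 1 := by
  unfold euclNorm
  have h : (∑ i, Pi.single (0 : Fin (k + 1)) (1 : ℝ) i ^ 2) = (1 : ℝ) := by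
    rw [Finset.sum_eq_single (0 : Fin (k + 1))]
    · simp
    · intro b _ hb; simp [Pi.single_apply, hb]
    · simp
  rw [h, Real.sqrt_one]

theorem stmt_12 {m n : ℕ} (B Q : Matrix (Fin m) (Fin n) ℝ)
    (R : Matrix (Fin n) (Fin n) ℝ) (hQR : B = Q * R)
    (hQ : Q.transpose * Q = 1)
    (hR : ∀ i j : Fin n, j < i → R i j = 0)
    (c : Fin m → ℝ) (γ : ℝ) (hγ : 0 < γ) :
    sigmaMin (augment B (γ • c)) ≥
      min (sigmaMin B) γ * sigmaMin (augment Q c) := by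
  set M := min (sigmaMin B) γ with hMdef
  have hM0 : 0 ≤ M := le_min (sigmaMin_nonneg B) hγ.le
  have hQc0 : 0 ≤ sigmaMin (augment Q c) := sigmaMin_nonneg _
  rw [ge_iff_le, sigmaMin]
  apply le_csInf
  · exact ⟨_, Pi.single 0 1, euclNorm_single, rfl⟩
  rintro r ⟨x, hx, rfl⟩
  set y : Fin n → ℝ := fun j => x j.castSucc with hy
  set t := x (Fin.last n) with ht
  set z : Fin (n + 1) → ℝ := Fin.snoc (R.mulVec y) (γ * t) with hzdef
  have hmv : (augment B (γ • c)).mulVec x = (augment Q c).mulVec z := by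
    rw [augment_mulVec, augment_mulVec]
    have h1 : (fun j => z j.castSucc) = R.mulVec y := by
      funext j; simp [hzdef]
    have h2 : z (Fin.last n) = γ * t := by simp [hzdef]
    rw [h1, h2, hQR, ← Matrix.mulVec_mulVec]
    congr 1
    funext i
    simp only [Pi.smul_apply, smul_eq_mul]
    rw [ht]
    ring
  rw [hmv]
  have key1 : sigmaMin (augment Q c) * euclNorm z ≤ euclNorm ((augment Q c).mulVec z) :=
    sigmaMin_mul_le _ z
  have hBy : sigmaMin B * euclNorm y ≤ euclNorm (R.mulVec y) := by
    have h := sigmaMin_mul_le B y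
    rwa [show B.mulVec y = Q.mulVec (R.mulVec y) by
        rw [hQR, ← Matrix.mulVec_mulVec],
      euclNorm_mulVec_of_orthonormal hQ] at h
  have hzM : M ≤ euclNorm z := by
    have hsq : M ^ 2 ≤ euclNorm z ^ 2 := by
      rw [euclNorm_sq]
      have hsplit : ∑ i, z i ^ 2 = (∑ j, (R.mulVec y) j ^ 2) + (γ * t) ^ 2 := by
        rw [Fin.sum_univ_castSucc]
        simp [hzdef]
      have hx2 : (∑ j, y j ^ 2) + t ^ 2 = 1 := by
        have := euclNorm_sq x
        rw [hx, one_pow, Fin.sum_univ_castSucc] at this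
        exact this.symm
      have hy2 : 0 ≤ ∑ j, y j ^ 2 := by positivity
      have hyn : euclNorm y ^ 2 = ∑ j, y j ^ 2 := euclNorm_sq y
      have h1 : M ^ 2 * (∑ j, y j ^ 2) ≤ ∑ j, (R.mulVec y) j ^ 2 := by
        have hRy : (sigmaMin B * euclNorm y) ^ 2 ≤ ∑ j, (R.mulVec y) j ^ 2 := by
          rw [← euclNorm_sq]
          exact pow_le_pow_left₀ (mul_nonneg (sigmaMin_nonneg B) (euclNorm_nonneg y)) hBy 2
        calc M ^ 2 * (∑ j, y j ^ 2) = (M * euclNorm y) ^ 2 := by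
              rw [mul_pow, hyn]
          _ ≤ (sigmaMin B * euclNorm y) ^ 2 := by
              apply pow_le_pow_left₀ (mul_nonneg hM0 (euclNorm_nonneg y))
              exact mul_le_mul_of_nonneg_right (min_le_left _ _) (euclNorm_nonneg y)
          _ ≤ _ := hRy
      have h2 : M ^ 2 * t ^ 2 ≤ (γ * t) ^ 2 := by
        rw [mul_pow]
        apply mul_le_mul_of_nonneg_right _ (sq_nonneg t)
        apply pow_le_pow_left₀ hM0 (min_le_right _ _)
      calc M ^ 2 = M ^ 2 * ((∑ j, y j ^ 2) + t ^ 2) := by rw [hx2, mul_one]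
        _ = M ^ 2 * (∑ j, y j ^ 2) + M ^ 2 * t ^ 2 := by ring
        _ ≤ (∑ j, (R.mulVec y) j ^ 2) + (γ * t) ^ 2 := add_le_add h1 h2
        _ = ∑ i, z i ^ 2 := hsplit.symm
    have := Real.sqrt_le_sqrt hsq
    rwa [Real.sqrt_sq hM0, Real.sqrt_sq (euclNorm_nonneg z)] at this
  calc M * sigmaMin (augment Q c) ≤ euclNorm z * sigmaMin (augment Q c) :=
        mul_le_mul_of_nonneg_right hzM hQc0
    _ = sigmaMin (augment Q c) * euclNorm z := mul_comm _ _
    _ ≤ _ := key1
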